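/- arXiv:1612.03372 — 4 statements merged into one kernel-verified Lean document; each statement's English description precedes it below -/
import Mathlib

section
/- Let n ≥ 3 and 1 ≤ k < n/2, let ε = exp(2πi/n) ∈ ℂ, and let L be the Laplacian matrix of the generalized Petersen graph GP(n,k), regarded as a 2n×2n complex matrix. Then for every λ ∈ ℂ, det(λ·I_{2n} − L) = ∏_{j=0}^{n−1} ((3 − λ − ε^{−j} − ε^{j})·(3 − λ − ε^{−jk} − ε^{jk}) − 1). -/
open Polynomial

/-- The defining relation for the generalized Petersen graph `GP(n,k)`:
`u_i ~ u_{i+1}`, `u_i ~ v_i`, `v_i ~ v_{i+k}` (indices mod `n`);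
`Sum.inl i` is the outer vertex `u_i`, `Sum.inr i` the inner vertex `v_i`. -/
def gpRel (n k : ℕ) : (ZMod n ⊕ ZMod n) → (ZMod n ⊕ ZMod n) → Prop
  | Sum.inl i, Sum.inl j => j = i + 1
  | Sum.inl i, Sum.inr j => j = i
  | Sum.inr _, Sum.inl _ => False
  | Sum.inr i, Sum.inr j => j = i + (k : ZMod n)

instance (n k : ℕ) : DecidableRel (gpRel n k) := fun a b =>
  match a, b with
  | Sum.inl i, Sum.inl j => inferInstanceAs (Decidable (j = i + 1))
  | Sum.inl i, Sum.inr j => inferInstanceAs (Decidable (j = i))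
  | Sum.inr _, Sum.inl _ => inferInstanceAs (Decidable False)
  | Sum.inr i, Sum.inr j => inferInstanceAs (Decidable (j = i + (k : ZMod n)))

/-- The generalized Petersen graph `GP(n,k)`. -/
def genPetersen (n k : ℕ) : SimpleGraph (ZMod n ⊕ ZMod n) :=
  SimpleGraph.fromRel (gpRel n k)

instance (n k : ℕ) : DecidableRel (genPetersen n k).Adj := fun a b =>
  inferInstanceAs (Decidable (a ≠ b ∧ (gpRel n k a b ∨ gpRel n k b a)))

/-- The number of spanning trees of a graph `G`: the number of subgraphs that
contain all vertices and are trees. -/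
noncomputable def numSpanningTrees {V : Type*} (G : SimpleGraph V) : ℕ :=
  Nat.card {H : G.Subgraph // H.IsSpanning ∧ H.coe.IsTree}

/-!
The matrix `λ • 1 - L` has the block form `[[C₁, 1], [1, C₂]]`, where `C₁` and `C₂` are the
circulant matrices of the outer cycle (jumps `±1`) and of the inner cycles (jumps `±k`), with
`λ - 3` on the diagonal. The Fourier matrix `(ψ (i * j))` of a primitive additive character `ψ`
of `ZMod n` diagonalizes every circulant simultaneously, here with eigenvalues
`λ - 3 + ε ^ j + ε ^ (-j)` and `λ - 3 + ε ^ (j * k) + ε ^ (-(j * k))`. Conjugating by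
`blockDiag(F, F)` leaves `[[diag a, 1], [1, diag b]]`, which splits into `n` blocks of size `2`
with determinants `a j * b j - 1`.
-/

open Matrix

namespace Matrix

variable {ι R : Type*} [Fintype ι]

theorem sum_circulant_row [AddCommMonoid R] [AddGroup ι] (v : ι → R) (i : ι) :
    ∑ j, circulant v i j = ∑ t, v t :=
  (Equiv.subLeft i).sum_comp v

variable [DecidableEq ι]

theorem det_eq_det_of_mul_eq_mul [CommRing R] [IsDomain R] {M N P : Matrix ι ι R}
    (hP : P.det ≠ 0) (h : M * P = P * N) : M.det = N.det := by
  have h' := congrArg det h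
  rw [det_mul, det_mul, mul_comm P.det] at h'
  exact mul_right_cancel₀ hP h'

theorem det_fromBlocks_diagonal_one_one_diagonal [CommRing R] (a b : ι → R) :
    (fromBlocks (diagonal a) 1 1 (diagonal b)).det = ∏ i, (a i * b i - 1) := by
  let e : Fin 2 × ι ≃ ι ⊕ ι :=
    (Equiv.prodCongrLeft fun _ => finTwoEquiv).trans (Equiv.boolProdEquivSum ι)
  have hblock : (fromBlocks (diagonal a) 1 1 (diagonal b)).submatrix e e =
      blockDiagonal fun i => !![a i, 1; 1, b i] := by
    ext ⟨p, i⟩ ⟨q, j⟩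
    fin_cases p <;> fin_cases q <;>
      simp [e, finTwoEquiv, blockDiagonal_apply, diagonal_apply, one_apply]
  rw [← det_submatrix_equiv_self e, hblock, det_blockDiagonal]
  simp [det_fin_two_of]

theorem det_fromBlocks_one_one_of_mul_eq_mul_diagonal [CommRing R] [IsDomain R]
    {A B P : Matrix ι ι R} {a b : ι → R} (hP : P.det ≠ 0)
    (hA : A * P = P * diagonal a) (hB : B * P = P * diagonal b) :
    (fromBlocks A 1 1 B).det = ∏ i, (a i * b i - 1) := by
  rw [← det_fromBlocks_diagonal_one_one_diagonal]
  refine det_eq_det_of_mul_eq_mul (P := fromBlocks P 0 0 P) ?_ ?_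
  · rw [det_fromBlocks_zero₂₁]
    exact mul_ne_zero hP hP
  · simp [fromBlocks_multiply, hA, hB]

end Matrix

namespace AddChar

variable {R K : Type*} [CommRing R] [Fintype R] [DecidableEq R] [Field K] (ψ : AddChar R K)

def fourierMatrix : Matrix R R K := of fun i j => ψ (i * j)

theorem circulant_mul_fourierMatrix (v : R → K) :
    circulant v * ψ.fourierMatrix =
      ψ.fourierMatrix * diagonal fun j => ∑ t, v t * ψ (-(t * j)) := by
  ext i j
  rw [mul_diagonal, Matrix.mul_apply, Finset.mul_sum, ← (Equiv.subLeft i).sum_comp]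
  refine Finset.sum_congr rfl fun t _ => ?_
  simp only [fourierMatrix, circulant_apply, of_apply, Equiv.subLeft_apply, sub_sub_cancel]
  rw [sub_mul, sub_eq_add_neg, map_add_eq_mul]
  ring

theorem circulant_jump_mul_fourierMatrix (c : K) (s : R) :
    circulant (Pi.single 0 c + Pi.single s 1 + Pi.single (-s) 1) * ψ.fourierMatrix =
      ψ.fourierMatrix * diagonal fun j => c + ψ (j * s) + ψ (-(j * s)) := by
  rw [circulant_mul_fourierMatrix]
  congr 2
  ext j
  simp only [Pi.add_apply, Pi.single_apply, add_mul, ite_mul, zero_mul, one_mul,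
    Finset.sum_add_distrib, Finset.sum_ite_eq', Finset.mem_univ, ↓reduceIte, neg_zero,
    map_zero_eq_one, mul_one, neg_mul, neg_neg]
  rw [mul_comm s j]
  ring

theorem det_fourierMatrix_ne_zero [CharZero K] (hψ : ψ.IsPrimitive) :
    ψ.fourierMatrix.det ≠ 0 := by
  have hinv : ψ.fourierMatrix * (ψ.mulShift (-1)).fourierMatrix = (Fintype.card R : K) • 1 := by
    ext i j
    simp only [fourierMatrix, Matrix.mul_apply, of_apply, mulShift_apply, Matrix.smul_apply,
      Matrix.one_apply]
    have hterm (m : R) : ψ (i * m) * ψ (-1 * (m * j)) = ψ (m * (i - j)) := by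
      rw [← map_add_eq_mul]; ring_nf
    simp_rw [hterm, sum_mulShift _ hψ, sub_eq_zero]
    split_ifs <;> simp
  have hdet := congrArg det hinv
  rw [det_mul, det_smul, det_one, mul_one] at hdet
  exact left_ne_zero_of_mul (hdet ▸ pow_ne_zero _ (Nat.cast_ne_zero.mpr Fintype.card_ne_zero))

end AddChar

theorem Pi.single_one_add_single_one_apply {G R : Type*} [DecidableEq G] [AddMonoidWithOne R]
    {a b : G} (hab : a ≠ b) (x : G) :
    (Pi.single a 1 + Pi.single b 1 : G → R) x = if x = a ∨ x = b then 1 else 0 := by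
  by_cases ha : x = a
  · subst ha; simp [hab]
  · by_cases hb : x = b
    · subst hb; simp [Ne.symm hab]
    · simp [ha, hb]

theorem ne_and_eq_add_or_eq_add_iff {G : Type*} [AddCommGroup G] {s : G} (hs : s ≠ 0)
    (i j : G) : i ≠ j ∧ (j = i + s ∨ i = j + s) ↔ i - j = s ∨ i - j = -s := by
  constructor
  · rintro ⟨-, h | h⟩
    · right; rw [h]; abel
    · left; rw [h]; abel
  · rintro (h | h)
    · refine ⟨fun hij => hs (by rw [← h, hij, sub_self]), Or.inr ?_⟩
      rw [← h]; abel
    · refine ⟨fun hij => hs (by rw [← neg_eq_zero, ← h, hij, sub_self]), Or.inl ?_⟩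
      rw [← neg_neg s, ← h]; abel

theorem ZMod.natCast_ne_neg_natCast {n m : ℕ} (hm : 0 < m) (hmn : 2 * m < n) :
    (m : ZMod n) ≠ -m := by
  rw [Ne, eq_neg_iff_add_eq_zero, ← two_mul, ← Nat.cast_ofNat, ← Nat.cast_mul,
    ZMod.natCast_eq_zero_iff]
  exact fun h => absurd (Nat.le_of_dvd (by omega) h) (by omega)

open Sum

section GenPetersen

variable {n k : ℕ}

theorem genPetersen_adj_inl_inl (h : (1 : ZMod n) ≠ 0) (i j : ZMod n) :
    (genPetersen n k).Adj (inl i) (inl j) ↔ i - j = 1 ∨ i - j = -1 := by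
  simpa [genPetersen, gpRel] using ne_and_eq_add_or_eq_add_iff h i j

theorem genPetersen_adj_inl_inr (i j : ZMod n) :
    (genPetersen n k).Adj (inl i) (inr j) ↔ i = j := by
  simp [genPetersen, gpRel, eq_comm]

theorem genPetersen_adj_inr_inl (i j : ZMod n) :
    (genPetersen n k).Adj (inr i) (inl j) ↔ i = j := by
  simp [genPetersen, gpRel]

theorem genPetersen_adj_inr_inr (h : (k : ZMod n) ≠ 0) (i j : ZMod n) :
    (genPetersen n k).Adj (inr i) (inr j) ↔ i - j = k ∨ i - j = -k := by
  simpa [genPetersen, gpRel] using ne_and_eq_add_or_eq_add_iff h i j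

theorem adjMatrix_genPetersen (R : Type*) [AddMonoidWithOne R] (h1 : (1 : ZMod n) ≠ -1)
    (hk : (k : ZMod n) ≠ -k) :
    (genPetersen n k).adjMatrix R =
      fromBlocks (circulant (Pi.single 1 1 + Pi.single (-1) 1)) 1 1
        (circulant (Pi.single (k : ZMod n) 1 + Pi.single (-k : ZMod n) 1)) := by
  have h1₀ : (1 : ZMod n) ≠ 0 := fun h => h1 (by simp [h])
  have hk₀ : (k : ZMod n) ≠ 0 := fun h => hk (by simp [h])
  ext (i | i) (j | j)
  · simp [genPetersen_adj_inl_inl h1₀, circulant_apply, Pi.single_one_add_single_one_apply h1]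
  · simp [genPetersen_adj_inl_inr, one_apply]
  · simp [genPetersen_adj_inr_inl, one_apply]
  · simp [genPetersen_adj_inr_inr hk₀, circulant_apply, Pi.single_one_add_single_one_apply hk]

theorem genPetersen_degree [NeZero n] (h1 : (1 : ZMod n) ≠ -1) (hk : (k : ZMod n) ≠ -k)
    (v : ZMod n ⊕ ZMod n) : (genPetersen n k).degree v = 3 := by
  have hrow := (genPetersen n k).adjMatrix_mulVec_const_apply (α := ℕ) (a := 1) (v := v)
  rw [mul_one, Nat.cast_id, adjMatrix_genPetersen ℕ h1 hk] at hrow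
  rw [← hrow]
  rcases v with i | i <;>
    simp only [mulVec, dotProduct, Function.const_apply, mul_one, Fintype.sum_sum_type,
      fromBlocks_apply₁₁, fromBlocks_apply₁₂, fromBlocks_apply₂₁, fromBlocks_apply₂₂,
      sum_circulant_row] <;>
    simp [Finset.sum_add_distrib, one_apply]

theorem smul_one_sub_lapMatrix_genPetersen [NeZero n] {R : Type*} [CommRing R] (lam : R)
    (h1 : (1 : ZMod n) ≠ -1) (hk : (k : ZMod n) ≠ -k) :
    lam • (1 : Matrix (ZMod n ⊕ ZMod n) (ZMod n ⊕ ZMod n) R) - (genPetersen n k).lapMatrix R =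
      fromBlocks (circulant (Pi.single 0 (lam - 3) + Pi.single 1 1 + Pi.single (-1) 1)) 1 1
        (circulant (Pi.single 0 (lam - 3) + Pi.single (k : ZMod n) 1 +
          Pi.single (-k : ZMod n) 1)) := by
  rw [SimpleGraph.lapMatrix, SimpleGraph.degMatrix, adjMatrix_genPetersen R h1 hk]
  simp_rw [genPetersen_degree h1 hk]
  ext (i | i) (j | j) <;>
    simp [circulant_apply, Pi.single_apply, one_apply, diagonal_apply, sub_eq_zero] <;>
    split_ifs <;> ring

end GenPetersen

theorem ZMod.stdAddChar_intCast_eq_zpow (n : ℕ) [NeZero n] (a : ℤ) :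
    ZMod.stdAddChar (a : ZMod n) = Complex.exp (2 * Real.pi * Complex.I / n) ^ a := by
  rw [ZMod.stdAddChar_coe, ← Complex.exp_int_mul]
  ring_nf

theorem ZMod.prod_range_natCast {M : Type*} [CommMonoid M] (n : ℕ) [NeZero n]
    (f : ZMod n → M) : ∏ m ∈ Finset.range n, f m = ∏ j, f j :=
  Finset.prod_nbij' (↑) ZMod.val (by simp) (by simp [ZMod.val_lt])
    (fun m hm => ZMod.val_cast_of_lt (Finset.mem_range.mp hm))
    (fun j _ => ZMod.natCast_zmod_val j) (fun _ _ => rfl)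

open Complex in
/-- The characteristic polynomial of the Laplacian of `GP(n,k)`
factors through the `n`-th roots of unity. -/
theorem charpoly_lapMatrix_genPetersen (n k : ℕ) (hn : 3 ≤ n) (hk : 1 ≤ k)
    (hkn : 2 * k < n) (lam : ℂ) :
    haveI : NeZero n := ⟨by omega⟩
    (lam • (1 : Matrix (ZMod n ⊕ ZMod n) (ZMod n ⊕ ZMod n) ℂ)
        - (genPetersen n k).lapMatrix ℂ).det =
      ∏ j ∈ Finset.range n,
        ((3 - lam - Complex.exp (2 * Real.pi * I / n) ^ (-(j : ℤ))
            - Complex.exp (2 * Real.pi * I / n) ^ (j : ℤ)) *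
         (3 - lam - Complex.exp (2 * Real.pi * I / n) ^ (-((j : ℤ) * k))
            - Complex.exp (2 * Real.pi * I / n) ^ ((j : ℤ) * k)) - 1) := by
  have : NeZero n := ⟨by omega⟩
  let ψ : AddChar (ZMod n) ℂ := ZMod.stdAddChar
  have h1 : (1 : ZMod n) ≠ -1 := by
    simpa using ZMod.natCast_ne_neg_natCast (n := n) (m := 1) one_pos (by omega)
  have hkk : (k : ZMod n) ≠ -k := ZMod.natCast_ne_neg_natCast hk hkn
  show _ = _
  rw [smul_one_sub_lapMatrix_genPetersen lam h1 hkk,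
    det_fromBlocks_one_one_of_mul_eq_mul_diagonal
      (ψ.det_fourierMatrix_ne_zero (ZMod.isPrimitive_stdAddChar n))
      (ψ.circulant_jump_mul_fourierMatrix _ _) (ψ.circulant_jump_mul_fourierMatrix _ _),
    ← ZMod.prod_range_natCast]
  refine Finset.prod_congr rfl fun j _ => ?_
  simp only [← ZMod.stdAddChar_intCast_eq_zpow, Int.cast_neg, Int.cast_mul, Int.cast_natCast,
    mul_one]
  ring
end

section
/- Let n ≥ 1 and k ≥ 1 be integers, let ε = exp(2πi/n) ∈ ℂ, and let z_1, …, z_k ∈ ℂ be nonzero with z_s ≠ 1 for every s. Define H(z) = ∏_{s=1}^{k} (z − z_s)(z − z_s^{−1}) and w_s = (z_s + z_s^{−1})/2. Then ∏_{j=1}^{n−1} H(ε^j) = ∏_{s=1}^{k} (T_n(w_s) − 1)/(w_s − 1), where T_n is the Chebyshev polynomial of the first kind. -/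
open Polynomial Complex

/-! The `ζ^j`, `0 ≤ j < n`, are the roots of `X^n - 1`, so
`∏_{j<n} (ζ^j - z)(ζ^j - z⁻¹) = (z^n - 1)(z⁻¹^n - 1) = 2 - z^n - z⁻¹^n`, and removing the
factor `j = 0` divides this by `(1 - z)(1 - z⁻¹) = 2 - z - z⁻¹`. With `w = (z + z⁻¹)/2` one
has `2 T_m(w) = z^m + z⁻¹^m` (the Dickson polynomial identity), so these two numbers are
`-2 (T_m(w) - 1)` for `m = n` and `m = 1`. -/

namespace IsPrimitiveRoot

variable {R : Type*} [CommRing R] [IsDomain R] {n : ℕ} {ζ : R}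

theorem prod_range_sub_pow (hζ : IsPrimitiveRoot ζ n) (hn : 0 < n) (a : R) :
    ∏ j ∈ Finset.range n, (a - ζ ^ j) = a ^ n - 1 := by
  simpa [eval_prod] using congrArg (eval a) (X_pow_sub_C_eq_prod hζ hn (one_pow n)).symm

theorem prod_range_pow_sub_mul_pow_sub (hζ : IsPrimitiveRoot ζ n) (hn : 0 < n) (a b : R) :
    ∏ j ∈ Finset.range n, ((ζ ^ j - a) * (ζ ^ j - b)) = (a ^ n - 1) * (b ^ n - 1) := by
  rw [← hζ.prod_range_sub_pow hn, ← hζ.prod_range_sub_pow hn, ← Finset.prod_mul_distrib]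
  exact Finset.prod_congr rfl fun j _ ↦ by ring

end IsPrimitiveRoot

theorem Polynomial.Chebyshev.two_mul_T_eval_of_mul_eq_one {R : Type*} [CommRing R] {x y w : R}
    (hxy : x * y = 1) (hw : 2 * w = x + y) (n : ℕ) :
    2 * (T R n).eval w = x ^ n + y ^ n := by
  have h := congrArg (eval w) (C_comp_two_mul_X R n)
  rw [eval_comp, eval_mul, eval_ofNat, eval_X, hw, ← dickson_one_one_eq_chebyshev_C,
    dickson_one_one_eval_add_inv x y hxy, eval_mul, eval_ofNat] at h
  exact h.symm

theorem IsPrimitiveRoot.prod_Ico_pow_sub_mul_pow_sub_inv {K : Type*} [Field K] [NeZero (2 : K)]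
    {n : ℕ} {ζ : K} (hζ : IsPrimitiveRoot ζ n) (hn : 0 < n) {z : K} (hz0 : z ≠ 0)
    (hz1 : z ≠ 1) :
    ∏ j ∈ Finset.Ico 1 n, ((ζ ^ j - z) * (ζ ^ j - z⁻¹)) =
      ((Chebyshev.T K n).eval ((z + z⁻¹) / 2) - 1) / ((z + z⁻¹) / 2 - 1) := by
  have hzz : z * z⁻¹ = 1 := mul_inv_cancel₀ hz0
  have hw : 2 * ((z + z⁻¹) / 2) = z + z⁻¹ := mul_div_cancel₀ _ two_ne_zero
  generalize (z + z⁻¹) / 2 = w at hw ⊢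
  have hTn := Chebyshev.two_mul_T_eval_of_mul_eq_one hzz hw n
  have hprod := hζ.prod_range_pow_sub_mul_pow_sub hn z z⁻¹
  rw [Finset.prod_range_eq_mul_Ico _ hn, pow_zero] at hprod
  have hden : (1 - z) * (1 - z⁻¹) ≠ 0 :=
    mul_ne_zero (sub_ne_zero.2 (Ne.symm hz1)) (sub_ne_zero.2 (inv_ne_one.2 hz1).symm)
  have hw1 : w - 1 ≠ 0 := by
    contrapose! hden
    linear_combination hzz + hw - 2 * hden
  rw [eq_div_iff hw1]
  apply mul_left_cancel₀ hden
  have hzzn : z ^ n * z⁻¹ ^ n = 1 := by rw [← mul_pow, hzz, one_pow]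
  linear_combination (w - 1) * hprod + (w - 1) * hzzn + (w - 1) * hTn
    - ((Chebyshev.T K n).eval w - 1) * (hzz + hw)

theorem prod_H_roots_of_unity_general (n k : ℕ) (hn : 1 ≤ n)
    (z : Fin k → ℂ) (hz0 : ∀ s, z s ≠ 0) (hz1 : ∀ s, z s ≠ 1) :
    ∏ j ∈ Finset.Ico 1 n,
        (∏ s : Fin k,
          ((Complex.exp (2 * Real.pi * I / n) ^ (j : ℕ) - z s) *
           (Complex.exp (2 * Real.pi * I / n) ^ (j : ℕ) - (z s)⁻¹))) =
      ∏ s : Fin k,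
        ((Polynomial.Chebyshev.T ℂ n).eval ((z s + (z s)⁻¹) / 2) - 1) /
          ((z s + (z s)⁻¹) / 2 - 1) := by
  have hζ := Complex.isPrimitiveRoot_exp n (by omega)
  rw [Finset.prod_comm]
  exact Finset.prod_congr rfl fun s _ ↦ hζ.prod_Ico_pow_sub_mul_pow_sub_inv hn (hz0 s) (hz1 s)

/-- For nonzero `z_1, …, z_k` with `z_s ≠ 1`, setting
`H(z) = ∏_s (z − z_s)(z − z_s⁻¹)` and `w_s = (z_s + z_s⁻¹)/2`, one has
`∏_{j=1}^{n−1} H(ε^j) = ∏_{s=1}^{k} (T_n(w_s) − 1)/(w_s − 1)` where `ε = exp(2πi/n)`. -/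
theorem prod_H_roots_of_unity (n k : ℕ) (hn : 1 ≤ n) (hk : 1 ≤ k)
    (z : Fin k → ℂ) (hz0 : ∀ s, z s ≠ 0) (hz1 : ∀ s, z s ≠ 1) :
    ∏ j ∈ Finset.Ico 1 n,
        (∏ s : Fin k,
          ((Complex.exp (2 * Real.pi * I / n) ^ (j : ℕ) - z s) *
           (Complex.exp (2 * Real.pi * I / n) ^ (j : ℕ) - (z s)⁻¹))) =
      ∏ s : Fin k,
        ((Polynomial.Chebyshev.T ℂ n).eval ((z s + (z s)⁻¹) / 2) - 1) /
          ((z s + (z s)⁻¹) / 2 - 1) :=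
  prod_H_roots_of_unity_general n k hn z hz0 hz1
end

section
/- Let n ≥ 1 be an integer and let w, s ∈ ℂ with s² = (1 + w)/2. Then T_n(w) − 1 = (w − 1)·U_{n−1}(s)², where T_n and U_{n−1} are the Chebyshev polynomials of the first and second kind. -/
/-!
Substituting `w = T₂(s)` gives `Tₙ(w) = Tₙ(T₂(s)) = T₂ₙ(s) = 2 Tₙ(s)² − 1`, and the Pell identity
`Tₙ² − 1 = (X² − 1) Uₙ₋₁²` turns `2 (Tₙ(s)² − 1)` into `(T₂(s) − 1) Uₙ₋₁(s)²`.
-/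

open Polynomial

namespace Polynomial.Chebyshev

variable (R : Type*) [CommRing R]

theorem U_sq_add_U_sq (n : ℤ) :
    U R n ^ 2 + U R (n + 1) ^ 2 - 2 * X * U R n * U R (n + 1) = 1 := by
  have h := congrArg (·.comp (2 * X : R[X])) (S_sq_add_S_sq R n)
  simpa only [sub_comp, add_comp, mul_comp, pow_comp, X_comp, one_comp, S_comp_two_mul_X,
    mul_assoc] using h

theorem T_sq_sub_one (n : ℤ) : T R n ^ 2 - 1 = (X ^ 2 - 1) * U R (n - 1) ^ 2 := by
  have hCassini := U_sq_add_U_sq R (n - 1)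
  rw [sub_add_cancel] at hCassini
  linear_combination (norm := ring_nf) (T R n + U R n - X * U R (n - 1)) * T_eq_U_sub_X_mul_U R n
    + hCassini

theorem T_comp_T_two_sub_one (n : ℤ) :
    (T R n).comp (T R 2) - 1 = (T R 2 - 1) * U R (n - 1) ^ 2 := by
  have hDouble := T_mul_T R n n
  rw [← mul_two, sub_self, T_zero] at hDouble
  rw [← T_mul, T_two]
  linear_combination (norm := ring_nf) -hDouble + 2 * T_sq_sub_one R n

end Polynomial.Chebyshev

theorem cheb_T_sub_one_eq_general (n : ℕ) (w s : ℂ) (hs : s ^ 2 = (1 + w) / 2) :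
    (Polynomial.Chebyshev.T ℂ n).eval w - 1 =
      (w - 1) * ((Polynomial.Chebyshev.U ℂ ((n : ℤ) - 1)).eval s) ^ 2 := by
  have hw : (Polynomial.Chebyshev.T ℂ 2).eval s = w := by
    rw [Polynomial.Chebyshev.T_two]
    simp only [eval_sub, eval_mul, eval_pow, eval_X, eval_ofNat, eval_one, hs]
    ring
  simpa only [eval_sub, eval_mul, eval_pow, eval_comp, eval_one, hw] using
    congrArg (eval s) (Polynomial.Chebyshev.T_comp_T_two_sub_one ℂ n)

/-- For `n ≥ 1` and complex `w, s` with `s² = (1 + w)/2`,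
`T_n(w) − 1 = (w − 1)·U_{n−1}(s)²`, where `T_n` and `U_{n−1}` are the Chebyshev
polynomials of the first and second kind. -/
theorem cheb_T_sub_one_eq (n : ℕ) (hn : 1 ≤ n) (w s : ℂ) (hs : s ^ 2 = (1 + w) / 2) :
    (Polynomial.Chebyshev.T ℂ n).eval w - 1 =
      (w - 1) * ((Polynomial.Chebyshev.U ℂ ((n : ℤ) - 1)).eval s) ^ 2 :=
  cheb_T_sub_one_eq_general n w s hs
end

section
/- Let P, Q ∈ ℂ[X] be polynomials of degrees d ≥ 1 and e ≥ 1 respectively, each with no repeated roots, and let R ∈ ℂ[X] be a polynomial of degree r ≥ 1 such that R(λμ) = 0 for every root λ of P and every root μ of Q. If u, v : ℕ → ℂ satisfy the linear recurrences ∑_{i=0}^{d} P.coeff(i)·u(n+i) = 0 and ∑_{i=0}^{e} Q.coeff(i)·v(n+i) = 0 for all n ∈ ℕ, then the product sequence p(n) = u(n)·v(n) satisfies ∑_{i=0}^{r} R.coeff(i)·p(n+i) = 0 for all n ∈ ℕ. -/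
open Polynomial Module

/-!
Let `S` be the shift on sequences; `u` satisfies the recurrence of `F` exactly when
`F(S) u = 0`. Because `P` has distinct roots, the coprime factors `X - λ` of `P` split
`ker P(S)` into the sum of the eigenspaces `ker (S - λ)`, and likewise for `Q`. Eigenvectors
multiply: if `S u = λ u` and `S v = μ v` then `S (u v) = λ μ (u v)`, and `R(S)` kills an
eigenvector whose eigenvalue is a root of `R`. By bilinearity of the product of sequences,
`ker P(S) * ker Q(S) ≤ ker R(S)`.
-/

section Eigenspace

variable {K V : Type*} [Field K] [AddCommGroup V] [Module K V]

theorem Module.End.eigenspace_le_ker_aeval (f : End K V) {p : K[X]} {c : K} (hc : p.IsRoot c) :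
    f.eigenspace c ≤ LinearMap.ker (aeval f p) := fun x hx => by
  rw [LinearMap.mem_ker, End.aeval_apply_of_mem_apply_eq_smul (End.mem_eigenspace_iff.1 hx),
    hc.eq_zero, zero_smul]

theorem Module.End.ker_aeval_X_sub_C (f : End K V) (c : K) :
    LinearMap.ker (aeval f (X - C c)) = f.eigenspace c := by
  rw [End.eigenspace_def, map_sub, aeval_X, aeval_C, Algebra.algebraMap_eq_smul_one]

theorem Module.End.ker_aeval_prod_X_sub_C (f : End K V) (s : Finset K) :
    LinearMap.ker (aeval f (∏ c ∈ s, (X - C c))) = ⨆ c ∈ s, f.eigenspace c := by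
  classical
  induction s using Finset.induction_on with
  | empty => simp [End.one_eq_id]
  | insert a s ha ih =>
    have hcop : IsCoprime (X - C a) (∏ c ∈ s, (X - C c)) :=
      IsCoprime.prod_right fun c hc =>
        isCoprime_X_sub_C_of_isUnit_sub (sub_ne_zero.2 (ne_of_mem_of_not_mem hc ha).symm).isUnit
    rw [Finset.prod_insert ha, ← sup_ker_aeval_eq_ker_aeval_mul_of_coprime f hcop, ih,
      ker_aeval_X_sub_C, Finset.iSup_insert]

theorem Module.End.ker_aeval_eq_iSup_eigenspace (f : End K V) {p : K[X]} (hp : p.Separable)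
    (hsplit : p.Splits) :
    LinearMap.ker (aeval f p) = ⨆ c ∈ p.roots, f.eigenspace c := by
  classical
  have hprod : p = C p.leadingCoeff * ∏ c ∈ p.roots.toFinset, (X - C c) := by
    rw [Finset.prod, Multiset.toFinset_val, (nodup_roots hp).dedup, ← hsplit.eq_prod_roots]
  calc LinearMap.ker (aeval f p)
      = LinearMap.ker (aeval f (∏ c ∈ p.roots.toFinset, (X - C c))) := by
        conv_lhs => rw [hprod]
        rw [map_mul, aeval_C, Algebra.algebraMap_eq_smul_one, smul_mul_assoc, one_mul,
          LinearMap.ker_smul _ _ (leadingCoeff_ne_zero.2 hp.ne_zero)]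
    _ = ⨆ c ∈ p.roots, f.eigenspace c := by
        simp only [ker_aeval_prod_X_sub_C, Multiset.mem_toFinset]

end Eigenspace

def seqShift (R : Type*) [CommSemiring R] : End R (ℕ → R) :=
  LinearMap.funLeft R R (· + 1)

section Shift

variable {R : Type*}

theorem seqShift_pow_apply [CommSemiring R] (u : ℕ → R) (i n : ℕ) :
    (seqShift R ^ i) u n = u (n + i) := by
  induction i generalizing u with
  | zero => rfl
  | succ i ih =>
    rw [pow_succ, End.mul_apply, ih]
    rfl

theorem mem_ker_aeval_seqShift_iff [CommSemiring R] {F : R[X]} {u : ℕ → R} :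
    u ∈ LinearMap.ker (aeval (seqShift R) F) ↔
      ∀ n, ∑ i ∈ Finset.range (F.natDegree + 1), F.coeff i * u (n + i) = 0 := by
  simp only [LinearMap.mem_ker, funext_iff, aeval_eq_sum_range, LinearMap.sum_apply,
    Finset.sum_apply, LinearMap.smul_apply, Pi.smul_apply, seqShift_pow_apply, smul_eq_mul,
    Pi.zero_apply]

theorem mul_mem_eigenspace_seqShift [CommRing R] {a b : R} {u v : ℕ → R}
    (hu : u ∈ (seqShift R).eigenspace a) (hv : v ∈ (seqShift R).eigenspace b) :
    u * v ∈ (seqShift R).eigenspace (a * b) := by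
  rw [End.mem_eigenspace_iff] at hu hv ⊢
  funext n
  have hun := congr_fun hu n
  have hvn := congr_fun hv n
  simp only [seqShift, LinearMap.funLeft_apply, Pi.smul_apply, smul_eq_mul, Pi.mul_apply]
    at hun hvn ⊢
  rw [hun, hvn]
  ring

theorem ker_aeval_seqShift_mul_ker_aeval_le [Field R] {P Q F : R[X]}
    (hP : P.Separable) (hPs : P.Splits) (hQ : Q.Separable) (hQs : Q.Splits)
    (hroot : ∀ a b : R, P.IsRoot a → Q.IsRoot b → F.IsRoot (a * b)) :
    LinearMap.ker (aeval (seqShift R) P) * LinearMap.ker (aeval (seqShift R) Q) ≤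
      LinearMap.ker (aeval (seqShift R) F) := by
  simp only [End.ker_aeval_eq_iSup_eigenspace _ hP hPs, End.ker_aeval_eq_iSup_eigenspace _ hQ hQs,
    Submodule.iSup_mul, Submodule.mul_iSup, iSup_le_iff, Submodule.mul_le]
  intro b hb a ha u hu v hv
  exact End.eigenspace_le_ker_aeval _ (hroot a b (isRoot_of_mem_roots ha) (isRoot_of_mem_roots hb))
    (mul_mem_eigenspace_seqShift hu hv)

end Shift

theorem product_of_recurrences_general (P Q R : Polynomial ℂ)
    (hPsf : Squarefree P) (hQsf : Squarefree Q)
    (hroot : ∀ lam mu : ℂ, P.IsRoot lam → Q.IsRoot mu → R.IsRoot (lam * mu))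
    (u v : ℕ → ℂ)
    (hu : ∀ n : ℕ, ∑ i ∈ Finset.range (P.natDegree + 1), P.coeff i * u (n + i) = 0)
    (hv : ∀ n : ℕ, ∑ i ∈ Finset.range (Q.natDegree + 1), Q.coeff i * v (n + i) = 0) :
    ∀ n : ℕ,
      ∑ i ∈ Finset.range (R.natDegree + 1), R.coeff i * (u (n + i) * v (n + i)) = 0 := by
  have hPsep := PerfectField.separable_iff_squarefree.2 hPsf
  have hQsep := PerfectField.separable_iff_squarefree.2 hQsf
  have huv :
      u * v ∈ LinearMap.ker (aeval (seqShift ℂ) P) * LinearMap.ker (aeval (seqShift ℂ) Q) :=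
    Submodule.mul_mem_mul (mem_ker_aeval_seqShift_iff.2 hu) (mem_ker_aeval_seqShift_iff.2 hv)
  exact mem_ker_aeval_seqShift_iff.1 <|
    ker_aeval_seqShift_mul_ker_aeval_le hPsep (IsAlgClosed.splits P) hQsep (IsAlgClosed.splits Q)
      hroot huv

/-- If `P, Q ∈ ℂ[X]` are squarefree of positive degree, `R ∈ ℂ[X]`
has positive degree and vanishes at every product `λμ` of a root `λ` of `P` and a root
`μ` of `Q`, and `u, v` satisfy the linear recurrences determined by `P` and `Q`, then
`p(n) = u(n)·v(n)` satisfies the linear recurrence determined by `R`. -/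
theorem product_of_recurrences (P Q R : Polynomial ℂ)
    (hP : 1 ≤ P.natDegree) (hQ : 1 ≤ Q.natDegree) (hR : 1 ≤ R.natDegree)
    (hPsf : Squarefree P) (hQsf : Squarefree Q)
    (hroot : ∀ lam mu : ℂ, P.IsRoot lam → Q.IsRoot mu → R.IsRoot (lam * mu))
    (u v : ℕ → ℂ)
    (hu : ∀ n : ℕ, ∑ i ∈ Finset.range (P.natDegree + 1), P.coeff i * u (n + i) = 0)
    (hv : ∀ n : ℕ, ∑ i ∈ Finset.range (Q.natDegree + 1), Q.coeff i * v (n + i) = 0) :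
    ∀ n : ℕ,
      ∑ i ∈ Finset.range (R.natDegree + 1), R.coeff i * (u (n + i) * v (n + i)) = 0 :=
  product_of_recurrences_general P Q R hPsf hQsf hroot u v hu hv
end
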